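/- arXiv:1901.10730 — 3 statements merged into one kernel-verified Lean document; each statement's English description precedes it below -/
import Mathlib

section
/- Let F be a field and A ∈ F^{m×n} a matrix of rank r with generic rank profile (the leading principal k×k submatrix of A is invertible for 1 ≤ k ≤ r). Then there exist a matrix L ∈ F^{m×r} whose top r×r block is unit lower-triangular and a matrix U ∈ F^{r×n} whose left r×r block is upper-triangular and invertible such that A = L·U, and such L and U are unique. -/
/-- The leading principal `s × s` submatrix of a rectangular matrix. -/
def leadingSub {F : Type*} [Field F] {m n : ℕ} (A : Matrix (Fin m) (Fin n) F)
    (s : ℕ) (hm : s ≤ m) (hn : s ≤ n) : Matrix (Fin s) (Fin s) F :=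
  A.submatrix (Fin.castLE hm) (Fin.castLE hn)

open Matrix

section helpers
variable {F : Type*} [Field F]

open Matrix


section Tri
variable {s : ℕ}

lemma myLU_lower_mul (L M : Matrix (Fin s) (Fin s) F)
    (hL : ∀ i j, i < j → L i j = 0) (hM : ∀ i j, i < j → M i j = 0) :
    ∀ i j, i < j → (L * M) i j = 0 := by
  intro i j hij
  rw [Matrix.mul_apply]
  apply Finset.sum_eq_zero
  intro k _
  rcases lt_or_ge i k with h | h
  · rw [hL i k h, zero_mul]
  · rw [hM k j (h.trans_lt hij), mul_zero]

lemma myLU_upper_mul (L M : Matrix (Fin s) (Fin s) F)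
    (hL : ∀ i j, j < i → L i j = 0) (hM : ∀ i j, j < i → M i j = 0) :
    ∀ i j, j < i → (L * M) i j = 0 := by
  intro i j hij
  rw [Matrix.mul_apply]
  apply Finset.sum_eq_zero
  intro k _
  rcases lt_or_ge k i with h | h
  · rw [hL i k h, zero_mul]
  · rw [hM k j (hij.trans_le h), mul_zero]

lemma myLU_inv_lower (L : Matrix (Fin s) (Fin s) F)
    (hL : ∀ i j, i < j → L i j = 0) (hdet : IsUnit L.det) :
    ∀ i j, i < j → L⁻¹ i j = 0 := by
  haveI := L.invertibleOfIsUnitDet hdet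
  have h : L.BlockTriangular (OrderDual.toDual) := fun i j hij =>
    hL i j (OrderDual.toDual_lt_toDual.mp hij)
  have h2 := Matrix.blockTriangular_inv_of_blockTriangular h
  intro i j hij
  exact h2 (OrderDual.toDual_lt_toDual.mpr hij)

lemma myLU_inv_upper (U : Matrix (Fin s) (Fin s) F)
    (hU : ∀ i j, j < i → U i j = 0) (hdet : IsUnit U.det) :
    ∀ i j, j < i → U⁻¹ i j = 0 := by
  haveI := U.invertibleOfIsUnitDet hdet
  have h : U.BlockTriangular id := fun i j hij => hU i j hij
  have h2 := Matrix.blockTriangular_inv_of_blockTriangular h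
  intro i j hij
  exact h2 hij

lemma myLU_det_lower_unit (L : Matrix (Fin s) (Fin s) F)
    (hL : ∀ i j, i < j → L i j = 0) (hd : ∀ i, L i i = 1) : L.det = 1 := by
  have h : L.BlockTriangular (OrderDual.toDual) := fun i j hij =>
    hL i j (OrderDual.toDual_lt_toDual.mp hij)
  rw [Matrix.det_of_lowerTriangular L h]
  simp [hd]

lemma myLU_sq_unique (L₁ U₁ L₂ U₂ : Matrix (Fin s) (Fin s) F)
    (hL₁ : ∀ i j, i < j → L₁ i j = 0) (hL₁d : ∀ i, L₁ i i = 1)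
    (hU₁ : ∀ i j, j < i → U₁ i j = 0) (hU₁det : IsUnit U₁.det)
    (hL₂ : ∀ i j, i < j → L₂ i j = 0) (hL₂d : ∀ i, L₂ i i = 1)
    (hU₂ : ∀ i j, j < i → U₂ i j = 0)
    (heq : L₁ * U₁ = L₂ * U₂) : L₁ = L₂ ∧ U₁ = U₂ := by
  have hL₂det : IsUnit L₂.det := by rw [myLU_det_lower_unit L₂ hL₂ hL₂d]; exact isUnit_one
  have key : L₂⁻¹ * L₁ = U₂ * U₁⁻¹ := by
    have h := congrArg (fun X => L₂⁻¹ * X * U₁⁻¹) heq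
    simp only [Matrix.mul_assoc] at h
    rw [Matrix.mul_nonsing_inv U₁ hU₁det, Matrix.mul_one] at h
    rw [← Matrix.mul_assoc L₂⁻¹ L₂, Matrix.nonsing_inv_mul L₂ hL₂det, Matrix.one_mul] at h
    exact h
  set D := L₂⁻¹ * L₁ with hD
  have hDlow : ∀ i j, i < j → D i j = 0 :=
    myLU_lower_mul _ _ (myLU_inv_lower L₂ hL₂ hL₂det) hL₁
  have hDup : ∀ i j, j < i → D i j = 0 := by
    rw [key]
    exact myLU_upper_mul _ _ hU₂ (myLU_inv_upper U₁ hU₁ hU₁det)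
  have hLD : L₂ * D = L₁ := by
    rw [hD, ← Matrix.mul_assoc, Matrix.mul_nonsing_inv L₂ hL₂det, Matrix.one_mul]
  have hDdiag : ∀ i, D i i = 1 := by
    intro i
    have h1 : (L₂ * D) i i = 1 := by rw [hLD]; exact hL₁d i
    rw [Matrix.mul_apply] at h1
    rw [Finset.sum_eq_single i] at h1
    · rw [hL₂d i, one_mul] at h1; exact h1
    · intro k _ hk
      rcases lt_or_gt_of_ne hk with h | h
      · rw [hDlow k i h, mul_zero]
      · rw [hL₂ i k h, zero_mul]
    · intro h; exact absurd (Finset.mem_univ i) h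
  have hD1 : D = 1 := by
    ext i j
    rcases lt_trichotomy i j with h | h | h
    · rw [hDlow i j h, Matrix.one_apply_ne h.ne]
    · subst h; rw [hDdiag i, Matrix.one_apply_eq]
    · rw [hDup i j h, Matrix.one_apply_ne h.ne']
  constructor
  · rw [← hLD, hD1, Matrix.mul_one]
  · have h2 : U₂ * U₁⁻¹ = 1 := by rw [← key, hD1]
    have := congrArg (fun X => X * U₁) h2
    simp only [Matrix.mul_assoc, Matrix.one_mul] at this
    rw [Matrix.nonsing_inv_mul U₁ hU₁det, Matrix.mul_one] at this
    exact this.symm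
end Tri

set_option maxRecDepth 10000 in
lemma myLU_sq_exists : ∀ (s : ℕ) (M : Matrix (Fin s) (Fin s) F),
    (∀ k (hk : k ≤ s), IsUnit ((M.submatrix (Fin.castLE hk) (Fin.castLE hk)).det)) →
    ∃ L U : Matrix (Fin s) (Fin s) F,
      (∀ i j, i < j → L i j = 0) ∧ (∀ i, L i i = 1) ∧
      (∀ i j, j < i → U i j = 0) ∧ M = L * U := by
  intro s
  induction s with
  | zero =>
    intro M _
    exact ⟨1, 1, fun i => i.elim0, fun i => i.elim0, fun i => i.elim0,
      Subsingleton.elim _ _⟩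
  | succ s ih =>
    intro M hM
    set e : Fin s ⊕ Fin 1 ≃ Fin (s + 1) := finSumFinEquiv with he
    have hcomp : ∀ (k : ℕ) (hk : k ≤ s),
        (e ∘ Sum.inl) ∘ Fin.castLE hk = Fin.castLE (hk.trans s.le_succ) := by
      intro k hk
      funext x
      apply Fin.ext
      simp [he, finSumFinEquiv]
    set B : Matrix (Fin s) (Fin s) F := M.submatrix (e ∘ Sum.inl) (e ∘ Sum.inl) with hB
    have hBminors : ∀ k (hk : k ≤ s),
        IsUnit ((B.submatrix (Fin.castLE hk) (Fin.castLE hk)).det) := by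
      intro k hk
      rw [hB, Matrix.submatrix_submatrix, hcomp k hk]
      exact hM k (hk.trans s.le_succ)
    obtain ⟨L', U', hL'low, hL'diag, hU'up, hBLU⟩ := ih B hBminors
    have hL'det : IsUnit L'.det := by
      have h : L'.BlockTriangular (OrderDual.toDual) := fun i j hij =>
        hL'low i j (OrderDual.toDual_lt_toDual.mp hij)
      rw [Matrix.det_of_lowerTriangular L' h]
      simp [hL'diag]
    have hBdet : IsUnit B.det := by
      have := hBminors s le_rfl
      simpa using this
    have hU'det : IsUnit U'.det := by
      rw [hBLU, Matrix.det_mul] at hBdet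
      exact isUnit_of_mul_isUnit_right hBdet
    set w : Matrix (Fin 1) (Fin s) F := M.submatrix (e ∘ Sum.inr) (e ∘ Sum.inl) with hw
    set c : Matrix (Fin s) (Fin 1) F := M.submatrix (e ∘ Sum.inl) (e ∘ Sum.inr) with hc
    set d : Matrix (Fin 1) (Fin 1) F := M.submatrix (e ∘ Sum.inr) (e ∘ Sum.inr) with hd
    set L'' : Matrix (Fin s ⊕ Fin 1) (Fin s ⊕ Fin 1) F :=
      Matrix.fromBlocks L' 0 (w * U'⁻¹) 1 with hL''
    set U'' : Matrix (Fin s ⊕ Fin 1) (Fin s ⊕ Fin 1) F :=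
      Matrix.fromBlocks U' (L'⁻¹ * c) 0 (d - w * U'⁻¹ * (L'⁻¹ * c)) with hU''
    have hMblocks : M.submatrix e e = Matrix.fromBlocks B c w d := by
      ext (i | i) (j | j) <;> rfl
    have hmul : L'' * U'' = Matrix.fromBlocks B c w d := by
      rw [hL'', hU'', Matrix.fromBlocks_multiply]
      simp only [Matrix.zero_mul, Matrix.mul_zero, Matrix.one_mul, Matrix.mul_one,
        add_zero, zero_add]
      rw [← Matrix.mul_assoc L', Matrix.mul_nonsing_inv L' hL'det, Matrix.one_mul,
        Matrix.mul_assoc w U'⁻¹ U', Matrix.nonsing_inv_mul U' hU'det, Matrix.mul_one,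
        add_sub_cancel, ← hBLU]
    refine ⟨L''.submatrix e.symm e.symm, U''.submatrix e.symm e.symm, ?_, ?_, ?_, ?_⟩
    · intro i j hij
      show L'' (e.symm i) (e.symm j) = 0
      have hij' : e (e.symm i) < e (e.symm j) := by simpa using hij
      rcases hp : e.symm i with a | x <;> rcases hq : e.symm j with b | y <;>
          rw [hp, hq] at hij'
      · have hab : a < b := hij'
        rw [hL'']
        exact hL'low a b hab
      · rw [hL'']
        rfl
      · exfalso
        have hb := b.isLt
        have h2 : s + x.val < b.val := hij'
        omega
      · exfalso
        have h2 : s + x.val < s + y.val := hij'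
        have hx := x.isLt
        have hy := y.isLt
        omega
    · intro i
      show L'' (e.symm i) (e.symm i) = 1
      rcases e.symm i with a | x
      · rw [hL'']
        exact hL'diag a
      · rw [hL'']
        exact Matrix.one_apply_eq x
    · intro i j hij
      show U'' (e.symm i) (e.symm j) = 0
      have hij' : e (e.symm j) < e (e.symm i) := by simpa using hij
      rcases hp : e.symm i with a | x <;> rcases hq : e.symm j with b | y <;>
          rw [hp, hq] at hij'
      · have hab : b < a := hij'
        rw [hU'']
        exact hU'up a b hab
      · exfalso
        have ha := a.isLt
        have h2 : s + y.val < a.val := hij'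
        omega
      · rw [hU'']
        rfl
      · exfalso
        have h2 : s + y.val < s + x.val := hij'
        have hx := x.isLt
        have hy := y.isLt
        omega
    · calc M = (M.submatrix (⇑e) (⇑e)).submatrix (⇑e.symm) (⇑e.symm) := by
            simp [Matrix.submatrix_submatrix]
        _ = (L'' * U'').submatrix (⇑e.symm) (⇑e.symm) := by rw [hMblocks, ← hmul]
        _ = L''.submatrix (⇑e.symm) (⇑e.symm) * U''.submatrix (⇑e.symm) (⇑e.symm) := by
            rw [Matrix.submatrix_mul_equiv]

lemma myLU_rank_factor {m n r : ℕ} (A : Matrix (Fin m) (Fin n) F)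
    (hr : A.rank = r) (hrm : r ≤ m) (hrn : r ≤ n)
    (hA11 : IsUnit (leadingSub A r hrm hrn).det) :
    A = A.submatrix id (Fin.castLE hrn) * (leadingSub A r hrm hrn)⁻¹ *
        A.submatrix (Fin.castLE hrm) id := by
  set A11 := leadingSub A r hrm hrn with hA11def
  haveI : Invertible A11 := A11.invertibleOfIsUnitDet hA11
  ext i j
  set f : Fin r ⊕ Fin 1 → Fin m := Sum.elim (Fin.castLE hrm) (fun _ => i) with hf
  set g : Fin r ⊕ Fin 1 → Fin n := Sum.elim (Fin.castLE hrn) (fun _ => j) with hg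
  -- the bordered submatrix has rank ≤ r
  have hrank : (A.submatrix f g).rank ≤ r := by
    have h1 : (1 : Matrix (Fin m) (Fin m) F).submatrix f (Equiv.refl (Fin m)) * A
        = A.submatrix f id := by
      rw [Matrix.one_submatrix_mul]
      rfl
    have h2 : A.submatrix f id * (1 : Matrix (Fin n) (Fin n) F).submatrix (Equiv.refl (Fin n)) g
        = A.submatrix f g := by
      rw [Matrix.mul_submatrix_one]
      rfl
    calc (A.submatrix f g).rank
        = ((1 : Matrix (Fin m) (Fin m) F).submatrix f (Equiv.refl (Fin m)) * A *
            (1 : Matrix (Fin n) (Fin n) F).submatrix (Equiv.refl (Fin n)) g).rank := by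
          rw [h1, h2]
      _ ≤ ((1 : Matrix (Fin m) (Fin m) F).submatrix f (Equiv.refl (Fin m)) * A).rank :=
          Matrix.rank_mul_le_left _ _
      _ ≤ A.rank := Matrix.rank_mul_le_right _ _
      _ = r := hr
  have hdet : (A.submatrix f g).det = 0 := by
    by_contra h
    have hu : IsUnit (A.submatrix f g).det := isUnit_iff_ne_zero.mpr h
    have := Matrix.rank_of_isUnit _ ((Matrix.isUnit_iff_isUnit_det _).mpr hu)
    rw [this] at hrank
    simp at hrank
  -- identify the bordered submatrix as a block matrix
  set w : Matrix (Fin 1) (Fin r) F := A.submatrix (fun _ => i) (Fin.castLE hrn) with hw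
  set c : Matrix (Fin r) (Fin 1) F := A.submatrix (Fin.castLE hrm) (fun _ => j) with hc
  set d : Matrix (Fin 1) (Fin 1) F := A.submatrix (fun _ => i) (fun _ => j) with hd
  have hS : A.submatrix f g = Matrix.fromBlocks A11 c w d := by
    ext (p | p) (q | q) <;> rfl
  rw [hS, Matrix.det_fromBlocks₁₁] at hdet
  have hSchur : (d - w * ⅟A11 * c).det = 0 := by
    rcases mul_eq_zero.mp hdet with h | h
    · exact absurd h (IsUnit.ne_zero hA11)
    · exact h
  rw [Matrix.det_fin_one, invOf_eq_nonsing_inv] at hSchur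
  have hentry : A i j = (w * A11⁻¹ * c) 0 0 := by
    have := sub_eq_zero.mp (by simpa [Matrix.sub_apply] using hSchur)
    exact this
  rw [hentry, Matrix.mul_apply, Matrix.mul_apply]
  apply Finset.sum_congr rfl
  intro k _
  rw [Matrix.mul_apply, Matrix.mul_apply]
  rfl

end helpers

/-- a rank-`r` matrix with generic rank profile has a unique factorization
`A = L·U` with `L ∈ F^{m×r}` having unit lower-triangular top `r×r` block and
`U ∈ F^{r×n}` having invertible upper-triangular left `r×r` block. -/
theorem rank_deficient_lu_exists_unique {F : Type*} [Field F] {m n r : ℕ}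
    (A : Matrix (Fin m) (Fin n) F) (hr : A.rank = r) (hrm : r ≤ m) (hrn : r ≤ n)
    (hGRP : ∀ k : ℕ, 1 ≤ k → k ≤ r → ∀ (hm : k ≤ m) (hn : k ≤ n),
      IsUnit (leadingSub A k hm hn).det) :
    ∃! LU : Matrix (Fin m) (Fin r) F × Matrix (Fin r) (Fin n) F,
      (∀ i j : Fin r, i < j → LU.1.submatrix (Fin.castLE hrm) id i j = 0) ∧
      (∀ i : Fin r, LU.1.submatrix (Fin.castLE hrm) id i i = 1) ∧
      (∀ i j : Fin r, j < i → LU.2.submatrix id (Fin.castLE hrn) i j = 0) ∧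
      IsUnit (LU.2.submatrix id (Fin.castLE hrn)).det ∧
      A = LU.1 * LU.2 := by
  classical
  set A11 := leadingSub A r hrm hrn with hA11def
  have hminors : ∀ k (hk : k ≤ r),
      IsUnit ((A11.submatrix (Fin.castLE hk) (Fin.castLE hk)).det) := by
    intro k hk
    rcases Nat.eq_zero_or_pos k with rfl | hk1
    · simp [Matrix.det_fin_zero]
    · have heq : A11.submatrix (Fin.castLE hk) (Fin.castLE hk)
          = leadingSub A k (hk.trans hrm) (hk.trans hrn) := rfl
      rw [heq]
      exact hGRP k hk1 hk (hk.trans hrm) (hk.trans hrn)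
  obtain ⟨L1, U1, hL1low, hL1diag, hU1up, hfac⟩ := myLU_sq_exists r A11 hminors
  have hA11det : IsUnit A11.det := by simpa using hminors r le_rfl
  have hL1det : IsUnit L1.det := by
    rw [myLU_det_lower_unit L1 hL1low hL1diag]
    exact isUnit_one
  have hU1det : IsUnit U1.det := by
    have h := hA11det
    rw [hfac, Matrix.det_mul] at h
    exact isUnit_of_mul_isUnit_right h
  set C := A.submatrix id (Fin.castLE hrn) with hCdef
  set R := A.submatrix (Fin.castLE hrm) id with hRdef
  have key : A = C * A11⁻¹ * R := myLU_rank_factor A hr hrm hrn hA11det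
  set Lw := C * U1⁻¹ with hLwdef
  set Uw := L1⁻¹ * R with hUwdef
  have hCsub : C.submatrix (Fin.castLE hrm) id = A11 := rfl
  have hRsub : R.submatrix id (Fin.castLE hrn) = A11 := rfl
  have hLtop : Lw.submatrix (Fin.castLE hrm) id = L1 := by
    rw [hLwdef, Matrix.submatrix_mul C U1⁻¹ (Fin.castLE hrm) id id Function.bijective_id,
      Matrix.submatrix_id_id, hCsub, hfac, Matrix.mul_assoc,
      Matrix.mul_nonsing_inv U1 hU1det, Matrix.mul_one]
  have hUleft : Uw.submatrix id (Fin.castLE hrn) = U1 := by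
    rw [hUwdef, Matrix.submatrix_mul L1⁻¹ R id id (Fin.castLE hrn) Function.bijective_id,
      Matrix.submatrix_id_id, hRsub, hfac, ← Matrix.mul_assoc,
      Matrix.nonsing_inv_mul L1 hL1det, Matrix.one_mul]
  have hALU : A = Lw * Uw := by
    rw [hLwdef, hUwdef, key, hfac, Matrix.mul_inv_rev]
    simp only [Matrix.mul_assoc]
  refine ⟨(Lw, Uw), ⟨?_, ?_, ?_, ?_, ?_⟩, ?_⟩
  · intro i j hij
    show Lw.submatrix (Fin.castLE hrm) id i j = 0
    rw [hLtop]
    exact hL1low i j hij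
  · intro i
    show Lw.submatrix (Fin.castLE hrm) id i i = 1
    rw [hLtop]
    exact hL1diag i
  · intro i j hij
    show Uw.submatrix id (Fin.castLE hrn) i j = 0
    rw [hUleft]
    exact hU1up i j hij
  · show IsUnit (Uw.submatrix id (Fin.castLE hrn)).det
    rw [hUleft]
    exact hU1det
  · exact hALU
  · rintro ⟨L, U⟩ ⟨h1, h2, h3, h4, h5⟩
    simp only at h1 h2 h3 h4 h5
    have hs : A11 = L.submatrix (Fin.castLE hrm) id * U.submatrix id (Fin.castLE hrn) := by
      have hs0 : A11 = (L * U).submatrix (Fin.castLE hrm) (Fin.castLE hrn) := by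
        rw [hA11def, ← h5]
        rfl
      rw [Matrix.submatrix_mul L U (Fin.castLE hrm) id (Fin.castLE hrn)
        Function.bijective_id] at hs0
      exact hs0
    obtain ⟨hLL, hUU⟩ := myLU_sq_unique (L.submatrix (Fin.castLE hrm) id)
      (U.submatrix id (Fin.castLE hrn)) L1 U1 h1 h2 h3 h4 hL1low hL1diag hU1up
      (hs.symm.trans hfac)
    have hC : L * U1 = C := by
      have hC0 : C = L * U.submatrix id (Fin.castLE hrn) := by
        rw [hCdef, h5, Matrix.submatrix_mul L U id id (Fin.castLE hrn) Function.bijective_id,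
          Matrix.submatrix_id_id]
      rw [hC0, hUU]
    have hR : L1 * U = R := by
      have hR0 : R = L.submatrix (Fin.castLE hrm) id * U := by
        rw [hRdef, h5, Matrix.submatrix_mul L U (Fin.castLE hrm) id id Function.bijective_id,
          Matrix.submatrix_id_id]
      rw [hR0, hLL]
    have hLfin : L = Lw := by
      calc L = L * U1 * U1⁻¹ := by
            rw [Matrix.mul_assoc, Matrix.mul_nonsing_inv U1 hU1det, Matrix.mul_one]
        _ = C * U1⁻¹ := by rw [hC]
        _ = Lw := hLwdef.symm
    have hUfin : U = Uw := by
      calc U = L1⁻¹ * (L1 * U) := by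
            rw [← Matrix.mul_assoc, Matrix.nonsing_inv_mul L1 hL1det, Matrix.one_mul]
        _ = L1⁻¹ * R := by rw [hR]
        _ = Uw := hUwdef.symm
    exact Prod.ext hLfin hUfin
end

section
/- Let F be a field, θ ∈ F an element of multiplicative order at least m, and s ≥ 1. If z ∈ F^{m} (indexed by 0 ≤ j < m) has at most 2s nonzero entries and satisfies Σ_{j=0}^{m−1} z_j · θ^{i·j} = 0 for all 0 ≤ i < 2s, then z = 0. Consequently, two vectors in F^{m} each having at most s nonzero entries that agree on the 2s evaluations x ↦ Σ_j x_j θ^{i·j}, 0 ≤ i < 2s, are equal. -/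
/-! The vanishing of the first `n` moments `∑ j, z j * (θ ^ j) ^ i` says that `z` is
orthogonal to every polynomial of degree `< n` evaluated at the distinct nodes `θ ^ j`. If `z`
has at most `n` nonzero entries and `z j₀ ≠ 0`, the nodal polynomial of the other nodes in the
support of `z` has degree `< n` and, among the nodes of that support, is nonzero only at
`θ ^ j₀`, which forces `z j₀ = 0`. The second claim is the first one applied to `x - y`. -/

open Finset Polynomial Lagrange Function

section Moments

variable {ι R : Type*} [Fintype ι]

theorem sum_mul_eval_eq_zero_of_moments_eq_zero [CommSemiring R] {n : ℕ} {z v : ι → R}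
    (hz : ∀ i < n, ∑ j, z j * v j ^ i = 0) {p : R[X]} (hp : p.natDegree < n) :
    ∑ j, z j * p.eval (v j) = 0 :=
  calc ∑ j, z j * p.eval (v j)
      = ∑ i ∈ range n, p.coeff i * ∑ j, z j * v j ^ i := by
        simp_rw [eval_eq_sum_range' hp, mul_sum]
        rw [sum_comm]
        simp only [mul_left_comm]
    _ = 0 := sum_eq_zero fun i hi => by rw [hz i (mem_range.mp hi), mul_zero]

theorem eq_zero_of_moments_eq_zero [CommRing R] [IsDomain R] [DecidableEq R] {n : ℕ}
    {z v : ι → R} (hv : Injective v) (hcard : #{j | z j ≠ 0} ≤ n)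
    (hz : ∀ i < n, ∑ j, z j * v j ^ i = 0) : z = 0 := by
  classical
  funext j₀
  by_contra hj₀
  set S : Finset ι := {j | z j ≠ 0}
  have hj₀S : j₀ ∈ S := by simpa [S] using hj₀
  have hdeg : (nodal (S.erase j₀) v).natDegree < n := by
    rw [natDegree_nodal]
    exact (card_erase_lt_of_mem hj₀S).trans_le hcard
  have hsum := sum_mul_eval_eq_zero_of_moments_eq_zero hz hdeg
  rw [sum_eq_single j₀ ?_ (by simp)] at hsum
  · exact mul_ne_zero hj₀
      (eval_nodal_not_at_node fun k hk => hv.ne (ne_of_mem_erase hk).symm) hsum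
  · intro j _ hj
    by_cases hzj : z j = 0
    · rw [hzj, zero_mul]
    · rw [eval_nodal_at_node (mem_erase.mpr ⟨hj, by simpa [S] using hzj⟩), mul_zero]

theorem card_filter_sub_ne_zero_le {M : Type*} [AddGroup M] [DecidableEq M] (x y : ι → M) :
    #{j | x j - y j ≠ 0} ≤ #{j | x j ≠ 0} + #{j | y j ≠ 0} := by
  classical
  refine (card_le_card fun j => ?_).trans (card_union_le _ _)
  simp only [mem_filter, mem_univ, true_and, mem_union]
  contrapose!
  rintro ⟨hx, hy⟩
  rw [hx, hy, sub_zero]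

theorem eq_of_moments_eq [CommRing R] [IsDomain R] [DecidableEq R] {n : ℕ} {x y v : ι → R}
    (hv : Injective v) (hcard : #{j | x j ≠ 0} + #{j | y j ≠ 0} ≤ n)
    (hxy : ∀ i < n, ∑ j, x j * v j ^ i = ∑ j, y j * v j ^ i) : x = y := by
  refine sub_eq_zero.mp (eq_zero_of_moments_eq_zero hv
    ((card_filter_sub_ne_zero_le x y).trans hcard) fun i hi => ?_)
  simp only [Pi.sub_apply, sub_mul, sum_sub_distrib, hxy i hi, sub_self]

end Moments

theorem sparse_interpolation_uniqueness_general {F : Type*} [Field F] [DecidableEq F]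
    {m s : ℕ} (θ : F)
    (hθ : ∀ i j : ℕ, i < m → j < m → θ ^ i = θ ^ j → i = j) :
    (∀ z : Fin m → F,
        (Finset.univ.filter (fun j => z j ≠ 0)).card ≤ 2 * s →
        (∀ i : ℕ, i < 2 * s → ∑ j : Fin m, z j * θ ^ (i * (j : ℕ)) = 0) →
        z = 0) ∧
    (∀ x y : Fin m → F,
        (Finset.univ.filter (fun j => x j ≠ 0)).card ≤ s →
        (Finset.univ.filter (fun j => y j ≠ 0)).card ≤ s →
        (∀ i : ℕ, i < 2 * s →
          ∑ j : Fin m, x j * θ ^ (i * (j : ℕ)) = ∑ j : Fin m, y j * θ ^ (i * (j : ℕ))) →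
        x = y) := by
  have hv : Injective fun j : Fin m => θ ^ (j : ℕ) := fun a b h => Fin.ext (hθ _ _ a.2 b.2 h)
  simp only [pow_mul']
  exact ⟨fun z hz h => eq_zero_of_moments_eq_zero hv hz h,
    fun x y hx hy h => eq_of_moments_eq hv (by omega) h⟩

/-- sparse-interpolation uniqueness. If `θ ∈ F` has multiplicative order
at least `m` (i.e. `θ^0,…,θ^{m−1}` are pairwise distinct), then a vector `z ∈ F^m` with
at most `2s` nonzero entries whose `2s` Vandermonde evaluations
`∑_j z_j θ^{i·j}` (`0 ≤ i < 2s`) all vanish must be zero; consequently two vectors with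
at most `s` nonzero entries each agreeing on these `2s` evaluations are equal. -/
theorem sparse_interpolation_uniqueness {F : Type*} [Field F] [DecidableEq F]
    {m s : ℕ} (hs : 1 ≤ s) (θ : F)
    (hθ : ∀ i j : ℕ, i < m → j < m → θ ^ i = θ ^ j → i = j) :
    (∀ z : Fin m → F,
        (Finset.univ.filter (fun j => z j ≠ 0)).card ≤ 2 * s →
        (∀ i : ℕ, i < 2 * s → ∑ j : Fin m, z j * θ ^ (i * (j : ℕ)) = 0) →
        z = 0) ∧
    (∀ x y : Fin m → F,
        (Finset.univ.filter (fun j => x j ≠ 0)).card ≤ s →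
        (Finset.univ.filter (fun j => y j ≠ 0)).card ≤ s →
        (∀ i : ℕ, i < 2 * s →
          ∑ j : Fin m, x j * θ ^ (i * (j : ℕ)) = ∑ j : Fin m, y j * θ ^ (i * (j : ℕ))) →
        x = y) :=
  sparse_interpolation_uniqueness_general θ hθ
end

section
/- Let F be a field, U ∈ F^{n×n} an invertible upper-triangular matrix, H ∈ F^{m×n}, and R ∈ F^{m×n} the unique matrix with R·U = H. Let 𝓡 ∈ F^{m×n} be any matrix, J a subset of {1,…,n} containing ColSupport(R − 𝓡), and P ∈ F^{n×c} the selection matrix of J. Then Pᵀ·U·P is invertible and (R − 𝓡)·P = (H − 𝓡·U)·P·(Pᵀ·U·P)^{−1}. -/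
open Matrix

/-- The selection matrix `P ∈ F^{n×c}` of a subset `J ⊆ {1,…,n}` with `|J| = c`:
its columns are the standard basis vectors indexed by `J` in increasing order. -/
def selectionMatrix (F : Type*) [Zero F] [One F] {n c : ℕ}
    (J : Finset (Fin n)) (hc : J.card = c) : Matrix (Fin n) (Fin c) F :=
  Matrix.of fun i k => if i = (J.orderIsoOfFin hc k : Fin n) then 1 else 0

/-! Because `H - 𝓡 U = (R - 𝓡) U` and the columns of `R - 𝓡` outside `J` vanish, we have
`R - 𝓡 = (R - 𝓡) P Pᵀ`, hence `(H - 𝓡 U) P = (R - 𝓡) P · (Pᵀ U P)`. The matrix `Pᵀ U P` is the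
principal submatrix of `U` on `J`; as `J` is listed in increasing order it is again upper
triangular, with diagonal entries among those of `U`, so it is invertible. -/

section SelectionMatrix

variable {R : Type*} {n c : ℕ} (J : Finset (Fin n)) (hc : J.card = c)

theorem selectionMatrix_eq_submatrix_one [Zero R] [One R] :
    selectionMatrix R J hc = (1 : Matrix (Fin n) (Fin n) R).submatrix id (J.orderEmbOfFin hc) := by
  ext i k
  simp only [selectionMatrix, of_apply, submatrix_apply, id, one_apply,
    Finset.coe_orderIsoOfFin_apply]
  congr

variable [Semiring R]

theorem mul_selectionMatrix {l : Type*} (M : Matrix l (Fin n) R) :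
    M * selectionMatrix R J hc = M.submatrix id (J.orderEmbOfFin hc) := by
  simpa [selectionMatrix_eq_submatrix_one] using
    mul_submatrix_one (Equiv.refl _) (J.orderEmbOfFin hc) M

theorem transpose_selectionMatrix_mul {l : Type*} (M : Matrix (Fin n) l R) :
    (selectionMatrix R J hc)ᵀ * M = M.submatrix (J.orderEmbOfFin hc) id := by
  simpa [selectionMatrix_eq_submatrix_one, transpose_submatrix] using
    one_submatrix_mul (J.orderEmbOfFin hc) (Equiv.refl _) M

theorem mul_selectionMatrix_mul_transpose {l : Type*} {M : Matrix l (Fin n) R}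
    (hM : ∀ j, (∃ i, M i j ≠ 0) → j ∈ J) :
    M * selectionMatrix R J hc * (selectionMatrix R J hc)ᵀ = M := by
  ext i j
  have hzero : ∀ x ∉ J, M i x = 0 := fun x hx => by_contra fun h => hx (hM x ⟨i, h⟩)
  calc (M * selectionMatrix R J hc * (selectionMatrix R J hc)ᵀ) i j
      = ∑ k, M i (J.orderEmbOfFin hc k) *
          (1 : Matrix (Fin n) (Fin n) R) (J.orderEmbOfFin hc k) j := by
        rw [mul_selectionMatrix, selectionMatrix_eq_submatrix_one, transpose_submatrix,
          transpose_one, mul_apply]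
        rfl
    _ = ∑ x ∈ J, M i x * (1 : Matrix (Fin n) (Fin n) R) x j := by
        conv_rhs => rw [← J.map_orderEmbOfFin_univ hc, Finset.sum_map]
        rfl
    _ = (M * (1 : Matrix (Fin n) (Fin n) R)) i j := by
        rw [mul_apply]
        exact Finset.sum_subset (Finset.subset_univ J) fun x _ hx => by simp [hzero x hx]
    _ = M i j := by rw [Matrix.mul_one]

end SelectionMatrix

theorem Matrix.IsUpperTriangular.isUnit_det_submatrix {m n R : Type*} [LinearOrder m]
    [LinearOrder n] [Fintype m] [Fintype n] [DecidableEq m] [DecidableEq n] [CommRing R]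
    {U : Matrix n n R} (hU : U.IsUpperTriangular) (hdet : IsUnit U.det) {f : m → n}
    (hf : StrictMono f) : IsUnit (U.submatrix f f).det := by
  have hsub : (U.submatrix f f).IsUpperTriangular := fun _ _ h => hU (hf h)
  rw [det_of_isUpperTriangular hU, IsUnit.prod_univ_iff] at hdet
  rw [det_of_isUpperTriangular hsub, IsUnit.prod_univ_iff]
  exact fun k => hdet (f k)

/-- the core identity of the error-correcting TRSM algorithm: with `U`
invertible upper-triangular, `R` the (unique) solution of `R·U = H`, `𝓡` an approximate
solution, and `J ⊇ ColSupport(R − 𝓡)` with selection matrix `P`, the matrix `Pᵀ·U·P` is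
invertible and `(R − 𝓡)·P = (H − 𝓡·U)·P·(Pᵀ·U·P)⁻¹`. -/
theorem trsm_error_blackbox_identity {F : Type*} [Field F] {m n c : ℕ}
    (U : Matrix (Fin n) (Fin n) F)
    (hU : ∀ i j, j < i → U i j = 0) (hUinv : IsUnit U.det)
    (H R 𝓡 : Matrix (Fin m) (Fin n) F) (hR : R * U = H)
    (J : Finset (Fin n)) (hc : J.card = c)
    (hsupp : ∀ j : Fin n, (∃ i, (R - 𝓡) i j ≠ 0) → j ∈ J) :
    IsUnit ((selectionMatrix F J hc)ᵀ * U * selectionMatrix F J hc).det ∧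
    (R - 𝓡) * selectionMatrix F J hc =
      (H - 𝓡 * U) * selectionMatrix F J hc *
        ((selectionMatrix F J hc)ᵀ * U * selectionMatrix F J hc)⁻¹ := by
  set P := selectionMatrix F J hc
  have hunit : IsUnit (Pᵀ * U * P).det := by
    rw [mul_selectionMatrix, transpose_selectionMatrix_mul, submatrix_submatrix]
    exact IsUpperTriangular.isUnit_det_submatrix (fun i j h => hU i j h) hUinv
      (J.orderEmbOfFin hc).strictMono
  have hcorr : (H - 𝓡 * U) * P = (R - 𝓡) * P * (Pᵀ * U * P) :=
    calc (H - 𝓡 * U) * P = (R - 𝓡) * U * P := by rw [← hR, ← Matrix.sub_mul]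
      _ = (R - 𝓡) * P * Pᵀ * U * P := by rw [mul_selectionMatrix_mul_transpose J hc hsupp]
      _ = (R - 𝓡) * P * (Pᵀ * U * P) := by simp only [Matrix.mul_assoc]
  refine ⟨hunit, ?_⟩
  rw [hcorr, Matrix.mul_assoc, mul_nonsing_inv _ hunit, Matrix.mul_one]
end
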